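/- Let r ≥ 2 and let C = (w_1, …, w_{2ℓ+1}) be a semi-valid tuple in Ω_n such that |[w_i, w_{i-1}]| ≥ r for all i (i.e., C is r-valid). Then H_n^{(r)}(C) is M_1^{(r)}-saturated. -/

import Mathlib

open Finset

/-- An abstract convex geometric hypergraph: `m` vertices on a circle, with the
cyclic ordering `0 < 1 < ⋯ < m-1 < 0`, together with a family of edges. -/
structure CGH where
  m : ℕ
  edges : Finset (Finset (Fin m))

/-- A list of points of `Fin n` is in (strict) cyclic order if some rotation of it
is strictly increasing in the linear order of `Fin n`. -/
def CyclicSorted {n : ℕ} (l : List (Fin n)) : Prop :=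
  ∃ k : ℕ, (l.rotate k).Chain' (· < ·)

/-- `H` contains a subhypergraph isomorphic to the convex geometric hypergraph `F`:
there is an injection of the vertices of `F` into `Fin n` respecting the cyclic
orderings and sending every edge of `F` to an edge of `H`. -/
def HasCopy (F : CGH) {n : ℕ} (H : Finset (Finset (Fin n))) : Prop :=
  ∃ f : Fin F.m → Fin n, Function.Injective f ∧ CyclicSorted (List.ofFn f) ∧
    ∀ e ∈ F.edges, e.image f ∈ H

/-- `H` is an `F`-saturated `r`-uniform convex geometric hypergraph on `Fin n`. -/
def IsSat (F : CGH) (r : ℕ) {n : ℕ} (H : Finset (Finset (Fin n))) : Prop :=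
  (∀ h ∈ H, h.card = r) ∧ ¬ HasCopy F H ∧
    ∀ e : Finset (Fin n), e.card = r → e ∉ H → HasCopy F (insert e H)

/-- The saturation number `sat_○(n, F)` for `r`-uniform cgh's on `Fin n`. -/
noncomputable def satNum (F : CGH) (r n : ℕ) : ℕ :=
  sInf {k | ∃ H : Finset (Finset (Fin n)), IsSat F r H ∧ H.card = k}

/-- `M_1^{(r)}`: two geometrically disjoint `r`-tuples. -/
def M1r (r : ℕ) : CGH where
  m := 2 * r
  edges := {Finset.univ.filter (fun i : Fin (2 * r) => (i : ℕ) < r),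
            Finset.univ.filter (fun i : Fin (2 * r) => r ≤ (i : ℕ))}

def M1cgh : CGH := ⟨6, {({0, 1, 2} : Finset (Fin 6)), ({3, 4, 5} : Finset (Fin 6))}⟩
def M2cgh : CGH := ⟨6, {({0, 1, 3} : Finset (Fin 6)), ({2, 4, 5} : Finset (Fin 6))}⟩
def M3cgh : CGH := ⟨6, {({0, 2, 4} : Finset (Fin 6)), ({1, 3, 5} : Finset (Fin 6))}⟩
def S1cgh : CGH := ⟨5, {({0, 1, 4} : Finset (Fin 5)), ({0, 2, 3} : Finset (Fin 5))}⟩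
def S2cgh : CGH := ⟨5, {({0, 1, 2} : Finset (Fin 5)), ({0, 3, 4} : Finset (Fin 5))}⟩
def S3cgh : CGH := ⟨5, {({0, 1, 3} : Finset (Fin 5)), ({0, 2, 4} : Finset (Fin 5))}⟩
def D1cgh : CGH := ⟨4, {({0, 1, 2} : Finset (Fin 4)), ({0, 2, 3} : Finset (Fin 4))}⟩
def D2cgh : CGH := ⟨4, {({0, 1, 2} : Finset (Fin 4)), ({0, 1, 3} : Finset (Fin 4))}⟩

/-- The closed clockwise arc `[a, b]` in `Fin n`. -/
def arcCC {n : ℕ} (a b : Fin n) : Finset (Fin n) :=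
  if a ≤ b then Finset.univ.filter (fun x => a ≤ x ∧ x ≤ b)
  else Finset.univ.filter (fun x => a ≤ x ∨ x ≤ b)

/-- The open clockwise arc `(a, b)` in `Fin n`. -/
def arcOO {n : ℕ} (a b : Fin n) : Finset (Fin n) :=
  if a < b then Finset.univ.filter (fun x => a < x ∧ x < b)
  else Finset.univ.filter (fun x => a < x ∨ x < b)

/-- The tuple `(w_1, …, w_{2ℓ+1})` (`0`-indexed here) consists of distinct points with
`w_1 < w_3 < ⋯ < w_{2ℓ+1} < w_2 < w_4 < ⋯ < w_{2ℓ} < w_1` in the cyclic order. -/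
def SemiValid {n : ℕ} (ℓ : ℕ) (w : Fin (2 * ℓ + 1) → Fin n) : Prop :=
  Function.Injective w ∧
    CyclicSorted (List.ofFn fun p : Fin (2 * ℓ + 1) =>
      w ⟨(2 * (p : ℕ)) % (2 * ℓ + 1), Nat.mod_lt _ (by omega)⟩)

/-- A semi-valid tuple is `r`-valid if moreover `|[w_i, w_{i-1}]| ≥ r` for all `i`. -/
def RValid {n : ℕ} (r ℓ : ℕ) (w : Fin (2 * ℓ + 1) → Fin n) : Prop :=
  SemiValid ℓ w ∧ ∀ i : Fin (2 * ℓ + 1), r ≤ (arcCC (w i) (w (i - 1))).card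

/-- `H_n^{(r)}(C)`: all `r`-sets meeting every interval `[w_i, w_{i-1}]`. -/
def HnC {n : ℕ} (r ℓ : ℕ) (w : Fin (2 * ℓ + 1) → Fin n) : Finset (Finset (Fin n)) :=
  (Finset.powersetCard r Finset.univ).filter fun e =>
    ∀ i : Fin (2 * ℓ + 1), (e ∩ arcCC (w i) (w (i - 1))).Nonempty

/-- `j` is the vertex `λ(v)` for `v` in `H`. -/
def IsLam {n : ℕ} [NeZero n] (H : Finset (Finset (Fin n))) (v j : Fin n) : Prop :=
  (∃ h ∈ H, v ∈ h ∧ h ⊆ arcCC j v) ∧ ¬ ∃ h ∈ H, v ∈ h ∧ h ⊆ arcCC (j + 1) v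

/-- `j` is the vertex `ρ(v)` for `v` in `H`. -/
def IsRho {n : ℕ} [NeZero n] (H : Finset (Finset (Fin n))) (v j : Fin n) : Prop :=
  (∃ h ∈ H, v ∈ h ∧ h ⊆ arcCC v j) ∧ ¬ ∃ h ∈ H, v ∈ h ∧ h ⊆ arcCC v (j - 1)

noncomputable def lamF {n : ℕ} [NeZero n] (H : Finset (Finset (Fin n))) (v : Fin n) : Fin n :=
  letI := Classical.propDecidable (∃ j, IsLam H v j)
  if h : ∃ j, IsLam H v j then h.choose else v

noncomputable def rhoF {n : ℕ} [NeZero n] (H : Finset (Finset (Fin n))) (v : Fin n) : Fin n :=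
  letI := Classical.propDecidable (∃ j, IsRho H v j)
  if h : ∃ j, IsRho H v j then h.choose else v

/-- Strict cyclic betweenness on `Fin n`. -/
def CyclicSbtw {n : ℕ} (a b c : Fin n) : Prop :=
  (a < b ∧ b < c) ∨ (b < c ∧ c < a) ∨ (c < a ∧ a < b)

/-- Isomorphism of two cgh's on `Fin n`: a bijection of the vertex set respecting the
cyclic order and inducing a bijection of the edge sets. -/
def CGHIso {n : ℕ} (H H' : Finset (Finset (Fin n))) : Prop :=
  ∃ g : Fin n ≃ Fin n,
    (∀ a b c : Fin n, CyclicSbtw a b c → CyclicSbtw (g a) (g b) (g c)) ∧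
    ∀ e : Finset (Fin n), e ∈ H ↔ e.image g ∈ H'

/-- The 3-cgh `H_n^{(3)}`: all triples containing `v_0`, together with all triples
containing one of the pairs `{v_1, v_{n-2}}`, `{v_1, v_{n-1}}`, `{v_2, v_{n-1}}`. -/
def Hn3 (n : ℕ) (hn : 6 ≤ n) : Finset (Finset (Fin n)) :=
  (Finset.powersetCard 3 Finset.univ).filter fun e =>
    (⟨0, by omega⟩ : Fin n) ∈ e ∨
    ((⟨1, by omega⟩ : Fin n) ∈ e ∧ (⟨n - 2, by omega⟩ : Fin n) ∈ e) ∨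
    ((⟨1, by omega⟩ : Fin n) ∈ e ∧ (⟨n - 1, by omega⟩ : Fin n) ∈ e) ∨
    ((⟨2, by omega⟩ : Fin n) ∈ e ∧ (⟨n - 1, by omega⟩ : Fin n) ∈ e)

/-- Saturation with respect to a family of cgh's. -/
def FamSat (ℱ : Set CGH) (r : ℕ) {n : ℕ} (H : Finset (Finset (Fin n))) : Prop :=
  (∀ h ∈ H, h.card = r) ∧ (∀ F ∈ ℱ, ¬ HasCopy F H) ∧
    ∀ e : Finset (Fin n), e.card = r → e ∉ H → ∃ F ∈ ℱ, HasCopy F (insert e H)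

noncomputable def famSatNum (ℱ : Set CGH) (r n : ℕ) : ℕ :=
  sInf {k | ∃ H : Finset (Finset (Fin n)), FamSat ℱ r H ∧ H.card = k}

/-- Rotation of a point of `Fin n` by an integer amount `m`. -/
def finShift {n : ℕ} (hn : 0 < n) (v : Fin n) (m : ℤ) : Fin n :=
  ⟨(((v : ℤ) + m) % (n : ℤ)).toNat, by
    have h0 : (0 : ℤ) < (n : ℤ) := by exact_mod_cast hn
    have h1 := Int.emod_nonneg ((v : ℤ) + m) (by omega : (n : ℤ) ≠ 0)
    have h2 := Int.emod_lt_of_pos ((v : ℤ) + m) h0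
    omega⟩

/-- The tuple `w` is `(i,k)`-consecutive: starting from position `i`, the entries at
positions `i, i+2, …, i+2(k-1)` are `k` consecutive points `v_j, v_{j+1}, …, v_{j+k-1}`. -/
def ConsecAt {n ℓ : ℕ} (hn : 0 < n) (w : Fin (2 * ℓ + 1) → Fin n)
    (i : Fin (2 * ℓ + 1)) (k : ℕ) : Prop :=
  ∃ j : Fin n, ∀ s : ℕ, s < k →
    w (i + ⟨(2 * s) % (2 * ℓ + 1), Nat.mod_lt _ (by omega)⟩) = finShift hn j s

/-- The tuple `C_{i,k,m}`: the `k` consecutive points at positions `i, i+2, …, i+2(k-1)`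
are rotated by `m` units; all other entries are unchanged. -/
def shiftTuple {n ℓ : ℕ} (hn : 0 < n) (w : Fin (2 * ℓ + 1) → Fin n)
    (i : Fin (2 * ℓ + 1)) (k : ℕ) (m : ℤ) : Fin (2 * ℓ + 1) → Fin n :=
  fun p => if (p - i).val % 2 = 0 ∧ (p - i).val / 2 < k then finShift hn (w p) m else w p

/-!
Reindex the tuple by `g t = w (2 t)`: semi-validity says that `g 0, g 1, …, g (2ℓ)` lie in
cyclic order, and since `2 t - 1 = 2 (t + ℓ)` modulo `2ℓ + 1`, the intervals `[w_i, w_{i-1}]`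
become the half-arcs `[g t, g (t + ℓ)]`.

No copy of `M_1^{(r)}`: if two edges lie in disjoint arcs `[α, β]` and `[γ, δ]`, every half-arc
meets both, so it contains one of the two gaps `{β, γ}`, `{δ, α}`. Opposite half-arcs `t` and
`t + ℓ + 1` share only the point `g t`, so a gap lies in at most `ℓ` of the `2ℓ + 1` half-arcs,
and the two gaps cannot account for all of them.

Saturation: an `r`-set `e` outside `H` misses some half-arc `[g t, g (t + ℓ)]`. Every half-arc
contains `g t` or `g (t + ℓ)`, so any `r` points of `[g t, g (t + ℓ)]` including both endpoints
form an edge `s`, and `s`, `e` lie in complementary arcs.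
-/

section Arcs

variable {n : ℕ} {a b c x : Fin n}

theorem mem_arcCC_iff :
    x ∈ arcCC a b ↔ (a ≤ b ∧ a ≤ x ∧ x ≤ b) ∨ (b < a ∧ (a ≤ x ∨ x ≤ b)) := by
  unfold arcCC
  split_ifs with h <;> simp [not_le.mp, *]

theorem left_mem_arcCC : a ∈ arcCC a b := by
  rw [mem_arcCC_iff]; omega

theorem right_mem_arcCC : b ∈ arcCC a b := by
  rw [mem_arcCC_iff]; omega

theorem CyclicSbtw.rotate (h : CyclicSbtw a b c) : CyclicSbtw b c a := by
  unfold CyclicSbtw at *; tauto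

theorem CyclicSbtw.ne (h : CyclicSbtw a b c) : a ≠ b := by
  unfold CyclicSbtw at h; omega

theorem CyclicSbtw.mem_arcCC (h : CyclicSbtw a b c) : b ∈ arcCC a c := by
  unfold CyclicSbtw at h; rw [mem_arcCC_iff]; omega

theorem CyclicSbtw.map_strictMono {m : ℕ} {φ : Fin n → Fin m} (hφ : StrictMono φ)
    (h : CyclicSbtw a b c) : CyclicSbtw (φ a) (φ b) (φ c) := by
  unfold CyclicSbtw at *
  rcases h with ⟨h₁, h₂⟩ | ⟨h₁, h₂⟩ | ⟨h₁, h₂⟩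
  exacts [Or.inl ⟨hφ h₁, hφ h₂⟩, Or.inr (Or.inl ⟨hφ h₁, hφ h₂⟩), Or.inr (Or.inr ⟨hφ h₁, hφ h₂⟩)]

theorem CyclicSbtw.eq_of_mem_arcCC (h : CyclicSbtw a b c) (h₁ : x ∈ arcCC a b)
    (h₂ : x ∈ arcCC c a) : x = a := by
  unfold CyclicSbtw at h; rw [mem_arcCC_iff] at h₁ h₂; omega

theorem CyclicSbtw.gap_mem_arcCC {α β γ δ p q u v : Fin n} (h₁ : CyclicSbtw α β γ)
    (h₂ : CyclicSbtw γ δ α) (hp : p ∈ arcCC α β) (hq : q ∈ arcCC γ δ)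
    (hpu : p ∈ arcCC u v) (hqu : q ∈ arcCC u v) :
    (β ∈ arcCC u v ∧ γ ∈ arcCC u v) ∨ (δ ∈ arcCC u v ∧ α ∈ arcCC u v) := by
  unfold CyclicSbtw at h₁ h₂; simp only [mem_arcCC_iff] at *; omega

open Fin.CommRing in
theorem cyclicSbtw_add_natCast [NeZero n] (a : Fin n) {d₁ d₂ : ℕ} (h₁ : 0 < d₁) (h₁₂ : d₁ < d₂)
    (h₂ : d₂ < n) : CyclicSbtw a (a + (d₁ : Fin n)) (a + (d₂ : Fin n)) := by
  unfold CyclicSbtw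
  simp only [Fin.lt_def, Fin.val_add_eq_ite, Fin.val_natCast, Nat.mod_eq_of_lt h₂,
    Nat.mod_eq_of_lt (h₁₂.trans h₂)]
  split_ifs <;> omega

end Arcs

section CyclicSorted

variable {n N : ℕ}

theorem CyclicSorted.nodup {l : List (Fin n)} (h : CyclicSorted l) : l.Nodup := by
  obtain ⟨k, hk⟩ := h
  exact List.nodup_rotate.mp (List.sortedLT_iff_isChain.mpr hk).nodup

theorem cyclicSorted_append_of_pairwise {l₁ l₂ : List (Fin n)}
    (h : (l₁ ++ l₂).Pairwise (· < ·)) : CyclicSorted (l₂ ++ l₁) :=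
  ⟨l₂.length, by rw [List.rotate_append_length_eq]; exact List.isChain_iff_pairwise.mpr h⟩

theorem CyclicSorted.exists_strictMono [NeZero N] {g : Fin N → Fin n}
    (h : CyclicSorted (List.ofFn g)) : ∃ s : Fin N, StrictMono fun q => g (q + s) := by
  obtain ⟨k, hk⟩ := h
  refine ⟨Fin.ofNat N k, ?_⟩
  have hrot : (List.ofFn g).rotate k = List.ofFn fun q => g (q + Fin.ofNat N k) := by
    refine List.ext_getElem (by simp) fun i h₁ h₂ => ?_
    simp only [List.getElem_rotate, List.getElem_ofFn, List.length_ofFn]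
    congr 1
    ext
    simp [Fin.val_add]
  rw [← List.sortedLT_ofFn_iff, ← hrot, List.sortedLT_iff_isChain]
  exact hk

open Fin.CommRing

theorem CyclicSorted.cyclicSbtw_add [NeZero N] {g : Fin N → Fin n}
    (h : CyclicSorted (List.ofFn g)) (t : Fin N) {d₁ d₂ : ℕ} (h₁ : 0 < d₁) (h₁₂ : d₁ < d₂)
    (h₂ : d₂ < N) : CyclicSbtw (g t) (g (t + d₁)) (g (t + d₂)) := by
  obtain ⟨s, hs⟩ := h.exists_strictMono
  have := (cyclicSbtw_add_natCast (t - s) h₁ h₁₂ h₂).map_strictMono hs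
  simpa only [add_right_comm _ _ s, sub_add_cancel] using this

theorem CyclicSorted.mem_arcCC_add [NeZero N] {g : Fin N → Fin n}
    (h : CyclicSorted (List.ofFn g)) (t : Fin N) {d₁ d₂ : ℕ} (h₁₂ : d₁ ≤ d₂) (h₂ : d₂ < N) :
    g (t + d₁) ∈ arcCC (g t) (g (t + d₂)) := by
  rcases Nat.eq_zero_or_pos d₁ with rfl | h₁
  · simpa using left_mem_arcCC
  rcases h₁₂.eq_or_lt with rfl | h₁₂
  · exact right_mem_arcCC
  · exact (h.cyclicSbtw_add t h₁ h₁₂ h₂).mem_arcCC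

end CyclicSorted

theorem Finset.two_mul_card_le_of_forall_notMem {α : Type*} [Fintype α] [DecidableEq α]
    (σ : α ≃ α) (T : Finset α) (h : ∀ t ∈ T, σ t ∉ T) : 2 * T.card ≤ Fintype.card α := by
  have hdisj : Disjoint T (T.map σ.toEmbedding) := by
    rw [Finset.disjoint_left]
    intro x hx hx'
    obtain ⟨t, ht, rfl⟩ := Finset.mem_map.mp hx'
    exact h t ht hx
  calc 2 * T.card = (T ∪ T.map σ.toEmbedding).card := by
        rw [Finset.card_union_of_disjoint hdisj, Finset.card_map]; ring
    _ ≤ Fintype.card α := Finset.card_le_univ _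

section HalfArcs

open Fin.CommRing

theorem Fin.two_mul_natCast_add_one (ℓ : ℕ) : 2 * (ℓ : Fin (2 * ℓ + 1)) + 1 = 0 := by
  have h := Fin.natCast_self (2 * ℓ + 1)
  push_cast at h
  exact h

def halfArc {n ℓ : ℕ} (g : Fin (2 * ℓ + 1) → Fin n) (t : Fin (2 * ℓ + 1)) : Finset (Fin n) :=
  arcCC (g t) (g (t + ℓ))

variable {n ℓ : ℕ} {g : Fin (2 * ℓ + 1) → Fin n}

theorem CyclicSorted.eq_of_mem_halfArc (hg : CyclicSorted (List.ofFn g)) (hℓ : 0 < ℓ)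
    {t : Fin (2 * ℓ + 1)} {x : Fin n} (h₁ : x ∈ halfArc g t) (h₂ : x ∈ halfArc g (t + (ℓ + 1))) :
    x = g t := by
  have hsbtw := hg.cyclicSbtw_add t hℓ (Nat.lt_succ_self ℓ) (by omega : ℓ + 1 < 2 * ℓ + 1)
  have hwrap : t + (ℓ + 1) + ℓ = t := by linear_combination Fin.two_mul_natCast_add_one ℓ
  push_cast at hsbtw
  rw [halfArc, hwrap] at h₂
  exact hsbtw.eq_of_mem_arcCC h₁ h₂

theorem CyclicSorted.mem_halfArc_or (hg : CyclicSorted (List.ofFn g)) (t₀ t : Fin (2 * ℓ + 1)) :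
    g t₀ ∈ halfArc g t ∨ g (t₀ + ℓ) ∈ halfArc g t := by
  have ht₀ : t₀ = t + ((t₀ - t).val : Fin (2 * ℓ + 1)) := by simp
  have hd := (t₀ - t).isLt
  rcases le_or_gt (t₀ - t).val ℓ with hle | hgt
  · left
    rw [ht₀]
    exact hg.mem_arcCC_add t hle (by omega)
  · right
    have hshift : t₀ + ℓ = t + (((t₀ - t).val - (ℓ + 1) : ℕ) : Fin (2 * ℓ + 1)) := by
      rw [Nat.cast_sub hgt]
      nth_rw 1 [ht₀]
      push_cast
      linear_combination Fin.two_mul_natCast_add_one ℓ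
    rw [hshift]
    exact hg.mem_arcCC_add t (by omega) (by omega)

theorem CyclicSorted.exists_subset_halfArc_forall_meet {r : ℕ} (hg : CyclicSorted (List.ofFn g))
    (hr : 2 ≤ r) {t₀ : Fin (2 * ℓ + 1)} (hlong : r ≤ (halfArc g t₀).card) :
    ∃ s ⊆ halfArc g t₀, s.card = r ∧ ∀ t, (s ∩ halfArc g t).Nonempty := by
  have hends : {g t₀, g (t₀ + ℓ)} ⊆ halfArc g t₀ :=
    Finset.insert_subset left_mem_arcCC (Finset.singleton_subset_iff.mpr right_mem_arcCC)
  obtain ⟨s, hends_s, hs, hcard⟩ :=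
    Finset.exists_subsuperset_card_eq hends (Finset.card_le_two.trans hr) hlong
  refine ⟨s, hs, hcard, fun t => ?_⟩
  rcases hg.mem_halfArc_or t₀ t with h | h
  · exact ⟨_, Finset.mem_inter.mpr ⟨hends_s (Finset.mem_insert_self _ _), h⟩⟩
  · exact ⟨_, Finset.mem_inter.mpr
      ⟨hends_s (Finset.mem_insert_of_mem (Finset.mem_singleton_self _)), h⟩⟩

theorem CyclicSorted.not_forall_meet_halfArc (hg : CyclicSorted (List.ofFn g)) (hℓ : 0 < ℓ)
    {A B : Finset (Fin n)} {α β γ δ : Fin n} (h₁ : CyclicSbtw α β γ) (h₂ : CyclicSbtw γ δ α)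
    (hA : A ⊆ arcCC α β) (hB : B ⊆ arcCC γ δ) (hAg : ∀ t, (A ∩ halfArc g t).Nonempty)
    (hBg : ∀ t, (B ∩ halfArc g t).Nonempty) : False := by
  classical
  let covering (x y : Fin n) : Finset (Fin (2 * ℓ + 1)) :=
    univ.filter fun t => x ∈ halfArc g t ∧ y ∈ halfArc g t
  have hsmall : ∀ x y, x ≠ y → (covering x y).card ≤ ℓ := by
    intro x y hxy
    have := Finset.two_mul_card_le_of_forall_notMem (Equiv.addRight (ℓ + 1 : Fin (2 * ℓ + 1)))
      (covering x y) fun t ht ht' => by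
        simp only [covering, Finset.mem_filter, Finset.mem_univ, true_and,
          Equiv.coe_addRight] at ht ht'
        exact hxy ((hg.eq_of_mem_halfArc hℓ ht.1 ht'.1).trans
          (hg.eq_of_mem_halfArc hℓ ht.2 ht'.2).symm)
    simp only [Fintype.card_fin] at this
    omega
  have hcover : (univ : Finset (Fin (2 * ℓ + 1))) ⊆ covering β γ ∪ covering δ α := by
    intro t _
    obtain ⟨p, hp⟩ := hAg t
    obtain ⟨q, hq⟩ := hBg t
    rw [Finset.mem_inter] at hp hq
    simp only [covering, Finset.mem_union, Finset.mem_filter, Finset.mem_univ, true_and]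
    exact h₁.gap_mem_arcCC h₂ (hA hp.1) (hB hq.1) hp.2 hq.2
  have := (Finset.card_le_card hcover).trans (Finset.card_union_le _ _)
  rw [Finset.card_univ, Fintype.card_fin] at this
  have := hsmall β γ h₁.rotate.ne
  have := hsmall δ α h₂.rotate.ne
  omega

end HalfArcs

section Copies

variable {n r : ℕ} {H : Finset (Finset (Fin n))}

theorem hasCopy_M1r_of_cyclicSorted {P Q : List (Fin n)} (hP : P.length = r)
    (hQ : Q.length = r) (hPQ : CyclicSorted (P ++ Q)) (hPH : P.toFinset ∈ H)
    (hQH : Q.toFinset ∈ H) : HasCopy (M1r r) H := by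
  have hlen : (P ++ Q).length = 2 * r := by rw [List.length_append, hP, hQ]; omega
  have hm : (M1r r).m = 2 * r := rfl
  let f : Fin (M1r r).m → Fin n := fun i => (P ++ Q)[i.val]'(by omega)
  have hf : List.ofFn f = P ++ Q := List.ext_getElem (by simp [hlen, hm]) (by simp [f])
  refine ⟨f, List.nodup_ofFn.mp (hf ▸ hPQ.nodup), hf ▸ hPQ, ?_⟩
  intro e he
  have he : e = univ.filter (fun i : Fin (M1r r).m => i.val < r) ∨
      e = univ.filter (fun i : Fin (M1r r).m => r ≤ i.val) :=
    (Finset.mem_insert.mp he).imp_right Finset.mem_singleton.mp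
  rcases he with rfl | rfl
  · convert hPH using 1
    refine Finset.ext fun x => ?_
    rw [Finset.mem_image, List.mem_toFinset, List.mem_iff_getElem]
    simp only [Finset.mem_filter, Finset.mem_univ, true_and, f]
    constructor
    · rintro ⟨i, hi, rfl⟩
      exact ⟨i, by omega, (List.getElem_append_left _).symm⟩
    · rintro ⟨j, hj, rfl⟩
      exact ⟨⟨j, by omega⟩, by dsimp only; omega, List.getElem_append_left _⟩
  · convert hQH using 1
    refine Finset.ext fun x => ?_
    rw [Finset.mem_image, List.mem_toFinset, List.mem_iff_getElem]
    simp only [Finset.mem_filter, Finset.mem_univ, true_and, f]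
    constructor
    · rintro ⟨i, hi, rfl⟩
      exact ⟨i - P.length, by omega, (List.getElem_append_right (by omega)).symm⟩
    · rintro ⟨j, hj, rfl⟩
      refine ⟨⟨j + P.length, by omega⟩, by dsimp only; omega, ?_⟩
      simp [List.getElem_append_right]

open Fin.CommRing in
theorem HasCopy.exists_separated (hr : 2 ≤ r) (h : HasCopy (M1r r) H) :
    ∃ A ∈ H, ∃ B ∈ H, ∃ α β γ δ : Fin n, CyclicSbtw α β γ ∧ CyclicSbtw γ δ α ∧
      A ⊆ arcCC α β ∧ B ⊆ arcCC γ δ := by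
  obtain ⟨f, -, hf, hE⟩ := h
  have hm : (M1r r).m = 2 * r := rfl
  have : NeZero (M1r r).m := ⟨by omega⟩
  have hwrap : (r : Fin (M1r r).m) + (r : ℕ) = 0 := by
    rw [← Nat.cast_add, ← two_mul, ← hm, Fin.natCast_self]
  have hαβγ := hf.cyclicSbtw_add 0 (d₁ := r - 1) (d₂ := r) (by omega) (by omega) (by omega)
  have hγδα := hf.cyclicSbtw_add r (d₁ := r - 1) (d₂ := r) (by omega) (by omega) (by omega)
  rw [zero_add, zero_add] at hαβγ
  rw [hwrap] at hγδα
  -- the edges `f '' [0, r)` and `f '' [r, 2r)` lie in `[f 0, f (r - 1)]` and `[f r, f (2r - 1)]`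
  refine ⟨_, hE _ (Finset.mem_insert_self _ _),
    _, hE _ (Finset.mem_insert_of_mem (Finset.mem_singleton_self _)), _, _, _, _, hαβγ, hγδα,
    ?_, ?_⟩
  · intro x hx
    obtain ⟨i, hi, rfl⟩ := Finset.mem_image.mp hx
    have hi : i.val < r := (Finset.mem_filter.mp hi).2
    have := hf.mem_arcCC_add 0 (d₁ := i) (d₂ := r - 1) (by omega) (by omega)
    simpa only [zero_add, Fin.cast_val_eq_self] using this
  · intro x hx
    obtain ⟨i, hi, rfl⟩ := Finset.mem_image.mp hx
    have hi : r ≤ i.val := (Finset.mem_filter.mp hi).2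
    have := hf.mem_arcCC_add r (d₁ := i - r) (d₂ := r - 1) (by omega) (by omega)
    rwa [Nat.cast_sub hi, add_sub_cancel, Fin.cast_val_eq_self] at this

theorem hasCopy_M1r_of_subset_arcCC {A B : Finset (Fin n)} {a b : Fin n} (hAH : A ∈ H)
    (hBH : B ∈ H) (hA : A.card = r) (hB : B.card = r) (hAab : A ⊆ arcCC a b)
    (hBab : Disjoint B (arcCC a b)) : HasCopy (M1r r) H := by
  have hA' : ∀ x ∈ A, (a ≤ b ∧ a ≤ x ∧ x ≤ b) ∨ (b < a ∧ (a ≤ x ∨ x ≤ b)) :=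
    fun x hx => mem_arcCC_iff.mp (hAab hx)
  have hB' : ∀ y ∈ B, ¬((a ≤ b ∧ a ≤ y ∧ y ≤ b) ∨ (b < a ∧ (a ≤ y ∨ y ≤ b))) :=
    fun y hy => mem_arcCC_iff.not.mp (Finset.disjoint_left.mp hBab hy)
  rcases le_or_gt a b with hab | hab
  -- in cyclic order: `A`, the points of `B` after `b`, the points of `B` before `a`
  · refine hasCopy_M1r_of_cyclicSorted (P := A.sort)
      (Q := (B.filter (b < ·)).sort ++ (B.filter (¬ b < ·)).sort) (by simpa using hA)
      (by rw [List.length_append, Finset.length_sort, Finset.length_sort,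
        Finset.card_filter_add_card_filter_not, hB]) ?_ (by simpa using hAH)
      (by rwa [List.toFinset_append, Finset.sort_toFinset, Finset.sort_toFinset,
        Finset.filter_union_filter_not_eq])
    rw [← List.append_assoc]
    apply cyclicSorted_append_of_pairwise
    simp only [List.pairwise_append, List.mem_append, Finset.mem_sort, Finset.mem_filter,
      (Finset.sortedLT_sort _).pairwise, true_and]
    refine ⟨fun x hx y hy => ?_, fun x hx y hy => ?_⟩
    · have := hA' x hx; omega
    · have := hB' x hx.1
      rcases hy with hy | hy
      · have := hA' y hy; omega
      · omega
  -- in cyclic order: the points of `A` from `a` on, the points of `A` up to `b`, then `B`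
  · refine hasCopy_M1r_of_cyclicSorted
      (P := (A.filter (a ≤ ·)).sort ++ (A.filter (¬ a ≤ ·)).sort) (Q := B.sort)
      (by rw [List.length_append, Finset.length_sort, Finset.length_sort,
        Finset.card_filter_add_card_filter_not, hA]) (by simpa using hB) ?_
      (by rwa [List.toFinset_append, Finset.sort_toFinset, Finset.sort_toFinset,
        Finset.filter_union_filter_not_eq])
      (by simpa using hBH)
    rw [List.append_assoc]
    apply cyclicSorted_append_of_pairwise
    simp only [List.pairwise_append, List.mem_append, Finset.mem_sort, Finset.mem_filter,
      (Finset.sortedLT_sort _).pairwise, true_and]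
    refine ⟨fun x hx y hy => ?_, fun x hx y hy => ?_⟩
    · have := hA' x hx.1; have := hB' y hy; omega
    · rcases hx with hx | hx
      · omega
      · have := hB' x hx; omega

end Copies

section HnC

open Fin.CommRing

variable {n r ℓ : ℕ} {w : Fin (2 * ℓ + 1) → Fin n}

theorem SemiValid.cyclicSorted (hw : SemiValid ℓ w) :
    CyclicSorted (List.ofFn fun t : Fin (2 * ℓ + 1) => w (2 * t)) := by
  convert hw.2 using 4 with t
  ext
  simp [Fin.val_mul]

theorem halfArc_two_mul (t : Fin (2 * ℓ + 1)) :
    halfArc (fun t => w (2 * t)) t = arcCC (w (2 * t)) (w (2 * t - 1)) := by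
  rw [halfArc, show 2 * (t + ℓ) = 2 * t - 1 by linear_combination Fin.two_mul_natCast_add_one ℓ]

theorem mem_HnC_iff {e : Finset (Fin n)} :
    e ∈ HnC r ℓ w ↔ e.card = r ∧ ∀ t, (e ∩ halfArc (fun t => w (2 * t)) t).Nonempty := by
  simp only [HnC, Finset.mem_filter, Finset.mem_powersetCard_univ, halfArc_two_mul]
  refine and_congr_right fun _ => ⟨fun h t => h (2 * t), fun h i => ?_⟩
  have hi : 2 * ((ℓ + 1 : Fin (2 * ℓ + 1)) * i) = i := by
    linear_combination i * Fin.two_mul_natCast_add_one ℓ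
  simpa only [hi] using h ((ℓ + 1) * i)

end HnC

theorem HnC_saturated (n r ℓ : ℕ) (hr : 2 ≤ r) (hℓ : 1 ≤ ℓ)
    (w : Fin (2 * ℓ + 1) → Fin n) (hw : RValid r ℓ w) :
    IsSat (M1r r) r (HnC r ℓ w) := by
  obtain ⟨hsv, hlong⟩ := hw
  have hg := hsv.cyclicSorted
  refine ⟨fun e he => (mem_HnC_iff.mp he).1, fun hcopy => ?_, fun e he heH => ?_⟩
  · obtain ⟨A, hA, B, hB, α, β, γ, δ, h₁, h₂, hAα, hBγ⟩ := hcopy.exists_separated hr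
    exact hg.not_forall_meet_halfArc hℓ h₁ h₂ hAα hBγ (mem_HnC_iff.mp hA).2 (mem_HnC_iff.mp hB).2
  · obtain ⟨t, ht⟩ : ∃ t, ¬(e ∩ halfArc (fun t => w (2 * t)) t).Nonempty := by
      simpa [mem_HnC_iff, he] using heH
    obtain ⟨s, hs, hcard, hmeet⟩ :=
      hg.exists_subset_halfArc_forall_meet hr (halfArc_two_mul t ▸ hlong (2 * t))
    exact hasCopy_M1r_of_subset_arcCC (Finset.mem_insert_of_mem (mem_HnC_iff.mpr ⟨hcard, hmeet⟩))
      (Finset.mem_insert_self e _) hcard he hs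
      (Finset.disjoint_left.mpr fun x hxe hx => ht ⟨x, Finset.mem_inter.mpr ⟨hxe, hx⟩⟩)
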